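/- For every finite simple graph G, the following chain of inequalities holds: |nucleus(G)| + |diadem(G)| ≤ 2·α(G) ≤ |corona(G)| + |core(G)| ≤ 2·α(G) + k, where k is the maximum cardinality of a set of pairwise vertex-distinct odd cycles of G. -/

import Mathlib

variable {V : Type*} [Fintype V] [DecidableEq V]

/-- `S` is an independent set of `G`. -/
def IsIndep (G : SimpleGraph V) (S : Set V) : Prop :=
  ∀ ⦃u⦄, u ∈ S → ∀ ⦃v⦄, v ∈ S → ¬ G.Adj u v

/-- The independence number `α(G)`: the maximum cardinality of an independent set. -/
noncomputable def indepNum (G : SimpleGraph V) : ℕ :=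
  sSup {n : ℕ | ∃ S : Set V, IsIndep G S ∧ S.ncard = n}

/-- `S` is a maximum independent set of `G`. -/
def IsMaxIndep (G : SimpleGraph V) (S : Set V) : Prop :=
  IsIndep G S ∧ ∀ T : Set V, IsIndep G T → T.ncard ≤ S.ncard

/-- The neighborhood `N(X)` of a set of vertices `X`. -/
def nbhdSet (G : SimpleGraph V) (X : Set V) : Set V :=
  {v | ∃ u ∈ X, G.Adj u v}

/-- The difference `d_G(X) = |X| - |N(X)|` of a vertex set `X`. -/
noncomputable def diffSet (G : SimpleGraph V) (X : Set V) : ℤ :=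
  (X.ncard : ℤ) - ((nbhdSet G X).ncard : ℤ)

/-- `I` is a critical independent set of `G`. -/
def IsCriticalIndep (G : SimpleGraph V) (I : Set V) : Prop :=
  IsIndep G I ∧ ∀ J : Set V, IsIndep G J → diffSet G J ≤ diffSet G I

/-- `I` is a maximum-cardinality critical independent set of `G`. -/
def IsMaxCriticalIndep (G : SimpleGraph V) (I : Set V) : Prop :=
  IsCriticalIndep G I ∧ ∀ J : Set V, IsCriticalIndep G J → J.ncard ≤ I.ncard

/-- `core(G)`: the intersection of all maximum independent sets of `G`. -/
def coreSet (G : SimpleGraph V) : Set V := ⋂₀ {S : Set V | IsMaxIndep G S}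

/-- `corona(G)`: the union of all maximum independent sets of `G`. -/
def coronaSet (G : SimpleGraph V) : Set V := ⋃₀ {S : Set V | IsMaxIndep G S}

/-- `ker(G)`: the intersection of all critical independent sets of `G`. -/
def kerSet (G : SimpleGraph V) : Set V := ⋂₀ {S : Set V | IsCriticalIndep G S}

/-- `diadem(G)`: the union of all critical independent sets of `G`. -/
def diademSet (G : SimpleGraph V) : Set V := ⋃₀ {S : Set V | IsCriticalIndep G S}

/-- `nucleus(G)`: the intersection of all maximum-cardinality critical independent
sets of `G`. -/
def nucleusSet (G : SimpleGraph V) : Set V := ⋂₀ {S : Set V | IsMaxCriticalIndep G S}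

/-- `C` is the vertex set of some odd cycle of `G`. -/
def IsOddCycleVertexSet (G : SimpleGraph V) (C : Set V) : Prop :=
  ∃ (v : V) (w : G.Walk v v), w.IsCycle ∧ Odd w.length ∧ {x | x ∈ w.support} = C

/-- The maximum cardinality of a set of pairwise vertex-distinct odd cycles of `G`,
i.e. the number of distinct vertex sets of odd cycles of `G`. -/
noncomputable def numVertexDistinctOddCycles (G : SimpleGraph V) : ℕ :=
  {C : Set V | IsOddCycleVertexSet G C}.ncard

/-- `E` is the edge set of some odd cycle of `G`. -/
def IsOddCycleEdgeSet (G : SimpleGraph V) (E : Set (Sym2 V)) : Prop :=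
  ∃ (v : V) (w : G.Walk v v), w.IsCycle ∧ Odd w.length ∧ {e | e ∈ w.edges} = E

/-- The number of (distinct) odd cycles of `G`, where a cycle is identified with
its edge set. -/
noncomputable def numOddCycles (G : SimpleGraph V) : ℕ :=
  {E : Set (Sym2 V) | IsOddCycleEdgeSet G E}.ncard

/-!
Everything rests on exchange arguments. If `T` is a maximum independent set and `X` is an
independent set disjoint from `T`, then `(T \ N(X)) ∪ X` is independent, so
`|X| ≤ |N(X) ∩ T|`. If `J` is a critical independent set, then comparing `d(J)` with
`d(J \ N(Y))` gives Hall's condition `|Y| ≤ |N(Y) ∩ J|` for `Y ⊆ N(J)`; together with the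
supermodularity of `d` it shows that `(A \ N(J)) ∪ J` is again critical, and no smaller than
`A`, whenever `A` and `J` are.

Adding the maximum independent sets `T` one at a time to a family `F`, the exchange bound for
`X = ⋂ F \ T` shows that `|⋃ F| + |⋂ F|` never drops below `2α`. For a maximum critical
independent set `A`, the exchange of critical sets gives `diadem ⊆ A ∪ N(A)` and shows that no
neighbour of the diadem lies in the nucleus, so Hall's condition for `A` bounds `|diadem \ A|`
by `|A \ nucleus|`. Finally, deleting one vertex for each odd cycle makes `corona \ core`
bipartite; each of its two colour classes, together with `core`, which has no neighbour in the
corona, is independent.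
-/

namespace SimpleGraph.Walk

variable {α : Type*} {G : SimpleGraph α}

theorem exists_odd_isCycle_of_odd_loop {u : α} (w : G.Walk u u) (hw : Odd w.length) :
    ∃ (v : α) (c : G.Walk v v), c.IsCycle ∧ Odd c.length := by
  induction hn : w.length using Nat.strong_induction_on generalizing u w with
  | _ n ih =>
  cases w with
  | nil => simp at hw
  | cons h q =>
    by_cases hq : q.IsPath
    · refine ⟨u, cons h q,
        isCycle_iff_isPath_tail_and_le_length.2 ⟨by simpa using hq, ?_⟩, hw⟩
      have hq0 : q.length ≠ 0 := fun h0 => G.loopless.irrefl _ (eq_of_length_eq_zero h0 ▸ h)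
      rw [length_cons] at hw ⊢
      obtain ⟨k, hk⟩ := hw
      omega
    · -- a repeated vertex of `q` cuts `cons h q` into a closed subwalk `c` and a shorter
      -- closed walk `cons h (p₁.append p₂)`, one of which has odd length
      obtain ⟨x, c, ⟨p₁, p₂, rfl⟩, hc⟩ :
          ∃ (x : α) (c : G.Walk x x), c.IsSubwalk q ∧ ¬c.Nil := by
        simpa [isPath_iff_isSubwalk_imp_nil] using hq
      have hc0 : 0 < c.length := not_nil_iff_lt_length.1 hc
      simp only [length_cons, length_append] at hw hn
      rcases Nat.even_or_odd c.length with hce | hco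
      · refine ih _ ?_ (cons h (p₁.append p₂)) ?_ rfl <;>
          simp only [length_cons, length_append]
        · omega
        · obtain ⟨k, hk⟩ := hw
          obtain ⟨m, hm⟩ := hce
          exact ⟨k - m, by omega⟩
      · exact ih _ (by omega) c hco rfl

end SimpleGraph.Walk

open Set

variable {α : Type*} {G : SimpleGraph α}

lemma nbhdSet_mono {X Y : Set α} (h : X ⊆ Y) : nbhdSet G X ⊆ nbhdSet G Y :=
  fun _ ⟨u, hu, huv⟩ => ⟨u, h hu, huv⟩

lemma nbhdSet_union (X Y : Set α) : nbhdSet G (X ∪ Y) = nbhdSet G X ∪ nbhdSet G Y := by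
  ext v
  simp [nbhdSet, or_and_right, exists_or]

lemma nbhdSet_inter_subset (X Y : Set α) :
    nbhdSet G (X ∩ Y) ⊆ nbhdSet G X ∩ nbhdSet G Y :=
  subset_inter (nbhdSet_mono inter_subset_left) (nbhdSet_mono inter_subset_right)

lemma isIndep_empty : IsIndep G ∅ := fun _ h => h.elim

lemma IsIndep.mono {S T : Set α} (hT : IsIndep G T) (h : S ⊆ T) : IsIndep G S :=
  fun _ hu _ hv => hT (h hu) (h hv)

lemma IsIndep.union {S T : Set α} (hS : IsIndep G S) (hT : IsIndep G T)
    (hST : ∀ x ∈ S, ∀ y ∈ T, ¬G.Adj x y) : IsIndep G (S ∪ T) := by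
  rintro u (hu | hu) v (hv | hv) huv
  exacts [hS hu hv huv, hST u hu v hv huv, hST v hv u hu huv.symm, hT hu hv huv]

lemma IsIndep.disjoint_nbhdSet {S : Set α} (hS : IsIndep G S) : Disjoint S (nbhdSet G S) :=
  disjoint_left.2 fun _ hv ⟨_, hu, huv⟩ => hS hu hv huv

lemma IsIndep.diff_nbhdSet_union {S T : Set α} (hS : IsIndep G S) (hT : IsIndep G T) :
    IsIndep G ((S \ nbhdSet G T) ∪ T) :=
  (hS.mono sdiff_subset).union hT fun _ hx y hy hxy => hx.2 ⟨y, hy, hxy.symm⟩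

lemma ncard_diff_nbhdSet_union_add_ncard_inter [Finite α] (A : Set α) {J : Set α}
    (hJ : IsIndep G J) :
    ((A \ nbhdSet G J) ∪ J).ncard + (A ∩ nbhdSet G J).ncard = (A ∪ J).ncard := by
  rw [← ncard_union_eq]
  · congr 1
    ext x
    by_cases hx : x ∈ nbhdSet G J <;> simp [hx, or_comm]
  · exact disjoint_union_left.2 ⟨disjoint_sdiff_left.mono_right inter_subset_right,
      hJ.disjoint_nbhdSet.mono_right inter_subset_right⟩

lemma IsMaxIndep.ncard_eq_indepNum {S : Set α} (hS : IsMaxIndep G S) :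
    S.ncard = indepNum G :=
  (IsGreatest.csSup_eq ⟨⟨S, hS.1, rfl⟩, by rintro _ ⟨T, hT, rfl⟩; exact hS.2 T hT⟩ :
    sSup {n | ∃ T, IsIndep G T ∧ T.ncard = n} = S.ncard).symm

section MaxIndep

variable [Finite α]

lemma exists_isMaxIndep (G : SimpleGraph α) : ∃ S, IsMaxIndep G S := by
  obtain ⟨S, hS, hmax⟩ := exists_max_image {S : Set α | IsIndep G S} ncard (toFinite _)
    (nonempty_of_mem isIndep_empty)
  exact ⟨S, hS, hmax⟩

lemma IsIndep.ncard_le_indepNum {T : Set α} (hT : IsIndep G T) : T.ncard ≤ indepNum G := by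
  obtain ⟨S, hS⟩ := exists_isMaxIndep G
  exact hS.ncard_eq_indepNum ▸ hS.2 T hT

lemma IsMaxIndep.ncard_le_ncard_nbhdSet_inter {T X : Set α} (hT : IsMaxIndep G T)
    (hX : IsIndep G X) (hXT : Disjoint X T) : X.ncard ≤ (nbhdSet G X ∩ T).ncard := by
  have hexch := hT.2 _ (hT.1.diff_nbhdSet_union hX)
  rw [ncard_union_eq (hXT.symm.mono_left sdiff_subset)] at hexch
  have hsplit := ncard_inter_add_ncard_sdiff_eq_ncard T (nbhdSet G X)
  rw [inter_comm]
  omega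

lemma IsMaxIndep.ncard_add_ncard_le_ncard_union_add_ncard_inter {T I U : Set α}
    (hT : IsMaxIndep G T) (hI : IsIndep G I) (hIU : ∀ x ∈ I, ∀ y ∈ U, ¬G.Adj x y) :
    U.ncard + I.ncard ≤ (T ∪ U).ncard + (T ∩ I).ncard := by
  have hIT : (I \ T).ncard ≤ (T \ U).ncard :=
    calc (I \ T).ncard ≤ (nbhdSet G (I \ T) ∩ T).ncard :=
          hT.ncard_le_ncard_nbhdSet_inter (hI.mono sdiff_subset) disjoint_sdiff_left
      _ ≤ (T \ U).ncard := ncard_le_ncard fun y ⟨⟨x, hx, hxy⟩, hyT⟩ =>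
          ⟨hyT, fun hyU => hIU x hx.1 y hyU hxy⟩
  have hTU := ncard_sdiff_add_ncard T U
  have hI := ncard_inter_add_ncard_sdiff_eq_ncard I T
  rw [inter_comm]
  omega

lemma two_mul_indepNum_le_ncard_sUnion_add_ncard_sInter (F : Finset (Set α))
    (hF : ∀ S ∈ F, IsMaxIndep G S) (hne : F.Nonempty) :
    2 * indepNum G ≤ (⋃₀ (F : Set (Set α))).ncard + (⋂₀ (F : Set (Set α))).ncard := by
  induction hne using Finset.Nonempty.cons_induction with
  | singleton T =>
    simp only [Finset.coe_singleton, sUnion_singleton, sInter_singleton,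
      (hF T (Finset.mem_singleton_self T)).ncard_eq_indepNum]
    omega
  | cons T F hTF hne ih =>
    simp only [Finset.mem_cons, forall_eq_or_imp] at hF
    obtain ⟨S, hS⟩ := hne
    have hstep := hF.1.ncard_add_ncard_le_ncard_union_add_ncard_inter
      (U := ⋃₀ (F : Set (Set α))) ((hF.2 S hS).1.mono (sInter_subset_of_mem hS))
      fun x hx y ⟨S', hS', hyS'⟩ => (hF.2 S' hS').1 (hx S' hS') hyS'
    simp only [Finset.coe_cons, sUnion_insert, sInter_insert]
    exact (ih hF.2).trans (by omega)

theorem two_mul_indepNum_le_ncard_coronaSet_add_ncard_coreSet (G : SimpleGraph α) :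
    2 * indepNum G ≤ (coronaSet G).ncard + (coreSet G).ncard := by
  obtain ⟨S, hS⟩ := exists_isMaxIndep G
  have hfin : {S : Set α | IsMaxIndep G S}.Finite := toFinite _
  simpa [coronaSet, coreSet] using two_mul_indepNum_le_ncard_sUnion_add_ncard_sInter
    hfin.toFinset (fun S hS => hfin.mem_toFinset.1 hS) ⟨S, hfin.mem_toFinset.2 hS⟩

end MaxIndep

section Critical

variable [Finite α]

lemma exists_isMaxCriticalIndep (G : SimpleGraph α) : ∃ A, IsMaxCriticalIndep G A := by
  obtain ⟨J, hJ, hJmax⟩ := exists_max_image {S : Set α | IsIndep G S} (diffSet G) (toFinite _)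
    (nonempty_of_mem isIndep_empty)
  obtain ⟨A, hA, hAmax⟩ := exists_max_image {S : Set α | IsCriticalIndep G S} ncard
    (toFinite _) (nonempty_of_mem (show IsCriticalIndep G J from ⟨hJ, hJmax⟩))
  exact ⟨A, hA, hAmax⟩

lemma diffSet_add_diffSet_le (X Y : Set α) :
    diffSet G X + diffSet G Y ≤ diffSet G (X ∪ Y) + diffSet G (X ∩ Y) := by
  have hV := ncard_union_add_ncard_inter X Y
  have hN := ncard_union_add_ncard_inter (nbhdSet G X) (nbhdSet G Y)
  have hNinter := ncard_le_ncard (nbhdSet_inter_subset (G := G) X Y)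
  rw [← nbhdSet_union] at hN
  simp only [diffSet]
  omega

lemma IsCriticalIndep.ncard_le_ncard_nbhdSet_inter {J Y : Set α} (hJ : IsCriticalIndep G J)
    (hY : Y ⊆ nbhdSet G J) : Y.ncard ≤ (nbhdSet G Y ∩ J).ncard := by
  have hN : nbhdSet G (J \ nbhdSet G Y) ⊆ nbhdSet G J \ Y :=
    fun z ⟨u, hu, huz⟩ => ⟨⟨u, hu.1, huz⟩, fun hzY => hu.2 ⟨z, hzY, huz.symm⟩⟩
  have hd := hJ.2 (J \ nbhdSet G Y) (hJ.1.mono sdiff_subset)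
  have hJsplit := ncard_inter_add_ncard_sdiff_eq_ncard J (nbhdSet G Y)
  have hNle := ncard_le_ncard hN
  have hNsplit := ncard_sdiff_add_ncard_of_subset hY
  simp only [diffSet] at hd
  rw [inter_comm]
  omega

lemma IsIndep.ncard_le_ncard_diff_nbhdSet_union {A J : Set α} (hA : IsIndep G A)
    (hJ : IsCriticalIndep G J) : A.ncard ≤ ((A \ nbhdSet G J) ∪ J).ncard := by
  have hP : (A ∩ nbhdSet G J).ncard ≤ (J \ A).ncard :=
    calc (A ∩ nbhdSet G J).ncard ≤ (nbhdSet G (A ∩ nbhdSet G J) ∩ J).ncard :=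
          hJ.ncard_le_ncard_nbhdSet_inter inter_subset_right
      _ ≤ (J \ A).ncard := ncard_le_ncard fun y ⟨⟨x, hx, hxy⟩, hyJ⟩ =>
          ⟨hyJ, fun hyA => hA hx.1 hyA hxy⟩
  have hsplit := ncard_diff_nbhdSet_union_add_ncard_inter A hJ.1
  have hAJ := ncard_sdiff_add_ncard J A
  rw [union_comm] at hAJ
  omega

lemma IsCriticalIndep.diff_nbhdSet_union {A J : Set α} (hA : IsCriticalIndep G A)
    (hJ : IsCriticalIndep G J) : IsCriticalIndep G ((A \ nbhdSet G J) ∪ J) := by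
  set A' := (A \ nbhdSet G J) ∪ J
  set P := A ∩ nbhdSet G J
  have hA' : IsIndep G A' := hA.1.diff_nbhdSet_union hJ.1
  have hsplit : A'.ncard + P.ncard = (A ∪ J).ncard :=
    ncard_diff_nbhdSet_union_add_ncard_inter A hJ.1
  have hA'AJ : A' ⊆ A ∪ J := union_subset_union_left J sdiff_subset
  have hP : P.ncard ≤ (nbhdSet G (A ∪ J) \ nbhdSet G A').ncard :=
    calc P.ncard ≤ (nbhdSet G P ∩ J).ncard :=
          hJ.ncard_le_ncard_nbhdSet_inter inter_subset_right
      _ ≤ (nbhdSet G (A ∪ J) \ nbhdSet G A').ncard :=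
          ncard_le_ncard fun y ⟨⟨x, hx, hxy⟩, hyJ⟩ =>
            ⟨⟨x, Or.inl hx.1, hxy⟩, disjoint_left.1 hA'.disjoint_nbhdSet (Or.inr hyJ)⟩
  have hNsplit := ncard_sdiff_add_ncard_of_subset (nbhdSet_mono (G := G) hA'AJ)
  have hsuper := diffSet_add_diffSet_le (G := G) A J
  have hinter := hA.2 (A ∩ J) (hA.1.mono inter_subset_left)
  -- `d(A') ≥ d(A ∪ J) ≥ d(A) + d(J) - d(A ∩ J) ≥ d(J)`
  refine ⟨hA', fun K hK => ?_⟩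
  have hK := hJ.2 K hK
  simp only [diffSet] at hsuper hinter hK ⊢
  omega

lemma IsMaxCriticalIndep.diademSet_subset {A : Set α} (hA : IsMaxCriticalIndep G A) :
    diademSet G ⊆ A ∪ nbhdSet G A := by
  rintro v ⟨J, hJ, hvJ⟩
  by_contra hv
  rw [mem_union, not_or] at hv
  have hvA : insert v A ⊆ (J \ nbhdSet G A) ∪ A :=
    insert_subset (Or.inl ⟨hvJ, hv.2⟩) subset_union_right
  have hle := (ncard_le_ncard hvA).trans (hA.2 _ (IsCriticalIndep.diff_nbhdSet_union hJ hA.1))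
  rw [ncard_insert_of_notMem hv.1] at hle
  omega

lemma disjoint_nbhdSet_diademSet_nucleusSet (G : SimpleGraph α) :
    Disjoint (nbhdSet G (diademSet G)) (nucleusSet G) := by
  obtain ⟨A, hA⟩ := exists_isMaxCriticalIndep G
  refine disjoint_left.2 fun w ⟨v, ⟨J, hJ, hvJ⟩, hvw⟩ hw => ?_
  have hB : IsMaxCriticalIndep G ((A \ nbhdSet G J) ∪ J) :=
    ⟨hA.1.diff_nbhdSet_union hJ, fun K hK => (hA.2 K hK).trans
      (hA.1.1.ncard_le_ncard_diff_nbhdSet_union hJ)⟩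
  have hwJ : w ∈ nbhdSet G J := ⟨v, hvJ, hvw⟩
  rcases hw _ hB with hwA | hwJ'
  exacts [hwA.2 hwJ, disjoint_left.1 hJ.1.disjoint_nbhdSet hwJ' hwJ]

theorem ncard_nucleusSet_add_ncard_diademSet_le (G : SimpleGraph α) :
    (nucleusSet G).ncard + (diademSet G).ncard ≤ 2 * indepNum G := by
  obtain ⟨A, hA⟩ := exists_isMaxCriticalIndep G
  have hD : diademSet G \ A ⊆ nbhdSet G A :=
    fun v hv => (hA.diademSet_subset hv.1).resolve_left hv.2
  have hDA : (diademSet G \ A).ncard ≤ (A \ nucleusSet G).ncard :=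
    calc (diademSet G \ A).ncard ≤ (nbhdSet G (diademSet G \ A) ∩ A).ncard :=
          hA.1.ncard_le_ncard_nbhdSet_inter hD
      _ ≤ (A \ nucleusSet G).ncard := ncard_le_ncard fun w ⟨hwD, hwA⟩ =>
          ⟨hwA, disjoint_left.1 (disjoint_nbhdSet_diademSet_nucleusSet G)
            (nbhdSet_mono sdiff_subset hwD)⟩
  have hdiadem := ncard_le_ncard_sdiff_add_ncard (diademSet G) A
  have hnucleus : nucleusSet G ⊆ A := sInter_subset_of_mem hA
  have hA_split := ncard_sdiff_add_ncard_of_subset hnucleus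
  have hAα := hA.1.1.ncard_le_indepNum
  omega

end Critical

section OddCycles

lemma exists_isIndep_union_eq_of_colorable {A : Set α} (h : (G.induce A).Colorable 2) :
    ∃ S T, IsIndep G S ∧ IsIndep G T ∧ S ∪ T = A := by
  obtain ⟨c⟩ := h
  have hclass : ∀ i, IsIndep G {v | ∃ hv : v ∈ A, c ⟨v, hv⟩ = i} :=
    fun i u ⟨hu, hcu⟩ v ⟨hv, hcv⟩ huv =>
      c.valid (show (G.induce A).Adj ⟨u, hu⟩ ⟨v, hv⟩ from huv) (hcu.trans hcv.symm)
  refine ⟨_, _, hclass 0, hclass 1, subset_antisymm ?_ fun v hv => ?_⟩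
  · rintro v (⟨hv, -⟩ | ⟨hv, -⟩) <;> exact hv
  · obtain h | h : c ⟨v, hv⟩ = 0 ∨ c ⟨v, hv⟩ = 1 := by omega
    exacts [Or.inl ⟨hv, h⟩, Or.inr ⟨hv, h⟩]

open SimpleGraph in
lemma exists_isOddCycleVertexSet_subset_of_not_colorable {A : Set α}
    (h : ¬(G.induce A).Colorable 2) :
    ∃ W, IsOddCycleVertexSet G W ∧ W.Nonempty ∧ W ⊆ A := by
  simp only [two_colorable_iff_forall_loop_even, not_forall, Nat.not_even_iff_odd] at h
  obtain ⟨u, w, hw⟩ := h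
  obtain ⟨v, c, hc, hodd⟩ := w.exists_odd_isCycle_of_odd_loop hw
  let e := Embedding.induce (G := G) A
  refine ⟨{x | x ∈ (c.map e.toHom).support},
    ⟨_, c.map e.toHom, (Walk.isCycle_map_iff_of_injective e.injective).2 hc,
      by rwa [Walk.length_map], rfl⟩,
    ⟨_, (c.map e.toHom).start_mem_support⟩, ?_⟩
  intro x hx
  simp only [Walk.support_map, mem_ofPred_eq, List.mem_map] at hx
  obtain ⟨y, -, rfl⟩ := hx
  exact y.2

theorem exists_oddCycleTransversal [Finite α] (G : SimpleGraph α) (A : Set α) :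
    ∃ E : Set α, E.ncard ≤ {W | IsOddCycleVertexSet G W ∧ W ⊆ A}.ncard ∧
      (G.induce (A \ E)).Colorable 2 := by
  by_cases hA : (G.induce A).Colorable 2
  · exact ⟨∅, by simp, by rwa [sdiff_empty]⟩
  obtain ⟨W, hW, ⟨u, huW⟩, hWA⟩ := exists_isOddCycleVertexSet_subset_of_not_colorable hA
  have hlt : (A \ {u}).ncard < A.ncard := ncard_sdiff_singleton_lt_of_mem (hWA huW)
  obtain ⟨E, hE, hcol⟩ := exists_oddCycleTransversal G (A \ {u})
  have hcount : {W | IsOddCycleVertexSet G W ∧ W ⊆ A \ {u}}.ncard <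
      {W | IsOddCycleVertexSet G W ∧ W ⊆ A}.ncard :=
    ncard_lt_ncard ⟨fun W' hW' => ⟨hW'.1, hW'.2.trans sdiff_subset⟩,
      fun hsub => ((hsub ⟨hW, hWA⟩).2 huW).2 rfl⟩
  refine ⟨insert u E, (ncard_insert_le u E).trans (by omega), ?_⟩
  rwa [insert_eq, ← Set.sdiff_sdiff]
termination_by A.ncard

lemma not_adj_of_mem_coreSet_of_mem_coronaSet {u v : α} (hu : u ∈ coreSet G)
    (hv : v ∈ coronaSet G) : ¬G.Adj u v := by
  obtain ⟨S, hS, hvS⟩ := hv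
  exact hS.1 (hu S hS) hvS

theorem ncard_coronaSet_add_ncard_coreSet_le [Finite α] (G : SimpleGraph α) :
    (coronaSet G).ncard + (coreSet G).ncard ≤ 2 * indepNum G + numVertexDistinctOddCycles G := by
  obtain ⟨S₀, hS₀⟩ := exists_isMaxIndep G
  have hcore : IsIndep G (coreSet G) := hS₀.1.mono (sInter_subset_of_mem hS₀)
  set B := coronaSet G \ coreSet G
  obtain ⟨E, hE, hcol⟩ := exists_oddCycleTransversal G B
  obtain ⟨S, T, hS, hT, hST⟩ := exists_isIndep_union_eq_of_colorable hcol
  have hwithCore : ∀ P ⊆ B \ E, IsIndep G P → IsIndep G (P ∪ coreSet G) :=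
    fun P hPB hP => hP.union hcore fun x hx y hy hxy =>
      not_adj_of_mem_coreSet_of_mem_coronaSet hy (hPB hx).1.1 hxy.symm
  have hcorona : (coronaSet G).ncard ≤ ((B \ E) ∪ coreSet G).ncard + E.ncard :=
    calc (coronaSet G).ncard ≤ (((B \ E) ∪ coreSet G) ∪ E).ncard :=
          ncard_le_ncard fun v hv => by
            by_cases hvc : v ∈ coreSet G <;> by_cases hvE : v ∈ E <;> simp [B, hv, hvc, hvE]
      _ ≤ _ := ncard_union_le _ _
  have hpair : ((B \ E) ∪ coreSet G).ncard + (coreSet G).ncard ≤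
      (S ∪ coreSet G).ncard + (T ∪ coreSet G).ncard := by
    rw [← ncard_union_add_ncard_inter (S ∪ coreSet G), ← union_union_distrib_right, hST]
    exact Nat.add_le_add_left
      (ncard_le_ncard (subset_inter subset_union_right subset_union_right)) _
  have hSα := (hwithCore S (hST ▸ subset_union_left) hS).ncard_le_indepNum
  have hTα := (hwithCore T (hST ▸ subset_union_right) hT).ncard_le_indepNum
  have hcycles : {W | IsOddCycleVertexSet G W ∧ W ⊆ B}.ncard ≤ numVertexDistinctOddCycles G :=
    ncard_le_ncard fun W hW => hW.1
  omega

end OddCycles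

/-- For every finite simple graph `G`,
`|nucleus(G)| + |diadem(G)| ≤ 2·α(G) ≤ |corona(G)| + |core(G)| ≤ 2·α(G) + k`,
where `k` is the maximum cardinality of a set of pairwise vertex-distinct odd
cycles of `G`. -/
theorem nucleus_diadem_alpha_corona_core_chain (G : SimpleGraph V) :
    (nucleusSet G).ncard + (diademSet G).ncard ≤ 2 * indepNum G ∧
    2 * indepNum G ≤ (coronaSet G).ncard + (coreSet G).ncard ∧
    (coronaSet G).ncard + (coreSet G).ncard ≤
      2 * indepNum G + numVertexDistinctOddCycles G :=
  ⟨ncard_nucleusSet_add_ncard_diademSet_le G,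
    two_mul_indepNum_le_ncard_coronaSet_add_ncard_coreSet G,
    ncard_coronaSet_add_ncard_coreSet_le G⟩
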